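/- arXiv:1611.02365 — 2 statements merged into one kernel-verified Lean document; each statement's English description precedes it below -/
import Mathlib

section
/- Let d ≥ 1, T ≥ 2, let ψ_1, …, ψ_T ∈ ℝ^d and x_1, …, x_T ∈ ℝ, and define the squared losses ℓ_t(γ) = ½(x_t − ⟨γ, ψ_t⟩)² for γ ∈ ℝ^d. Assume S_t := ∑_{i=1}^t ψ_i ψ_iᵀ is positive definite for every t = 1, …, T, and let λ_min(t) > 0 denote the smallest eigenvalue of (1/t)·S_t. Define the follow-the-leader iterates γ_1 = 0 and γ_t = S_{t−1}⁻¹ · ∑_{i=1}^{t−1} x_i ψ_i for t = 2, …, T+1. Suppose L > 0 is such that for every t = 2, …, T and every point γ on the closed line segment joining γ_t and γ_{t+1}, |x_t − ⟨γ, ψ_t⟩| · ‖ψ_t‖₂ ≤ L. Then for every γ ∈ ℝ^d: ∑_{t=1}^T ℓ_t(γ_t) − ∑_{t=1}^T ℓ_t(γ) ≤ (ℓ_1(γ_1) − ℓ_1(γ_2)) + ∑_{t=2}^T L² / ((t−1) · λ_min(t−1)). -/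
/-!
Follow-the-leader (FTL) is compared with the "be-the-leader" sequence that plays `γ_{t+1}`
at round `t`: since `γ_{t+1}` minimizes the cumulative loss up to `t`, an induction shows that
be-the-leader has no regret, so the regret of FTL is at most `∑ₜ ℓₜ(γₜ) - ℓₜ(γₜ₊₁)`.

For least squares the cumulative loss is exactly quadratic around its minimizer, with Hessian
the Gram matrix `S_t`. Comparing the expansions around `γₜ` and `γₜ₊₁` gives
`ℓₜ(γₜ) - ℓₜ(γₜ₊₁) ≥ Δᵀ S_{t-1} Δ ≥ (t-1) λ_min(t-1) ‖Δ‖²` for `Δ = γₜ₊₁ - γₜ`, while the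
gradient bound at the midpoint gives `ℓₜ(γₜ) - ℓₜ(γₜ₊₁) ≤ L ‖Δ‖`. Together they bound each
term by `L² / ((t-1) λ_min(t-1))`.
-/

open Matrix

/-- The Euclidean (ℓ²) norm of a vector in `ℝ^d`. -/
noncomputable def euclNorm {d : ℕ} (v : Fin d → ℝ) : ℝ :=
  ‖(WithLp.equiv 2 (Fin d → ℝ)).symm v‖

open Finset

section BeTheLeader

variable {α : Type*} (f : ℕ → α → ℝ) (w : ℕ → α)

theorem sum_beTheLeader_le (n : ℕ)
    (hmin : ∀ t ∈ Icc 1 n, ∀ u, ∑ i ∈ Icc 1 t, f i (w (t + 1)) ≤ ∑ i ∈ Icc 1 t, f i u) (u : α) :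
    ∑ t ∈ Icc 1 n, f t (w (t + 1)) ≤ ∑ t ∈ Icc 1 n, f t u := by
  induction n generalizing u with
  | zero => simp
  | succ n ih =>
    have hprev := ih (fun t ht ↦ hmin t (Icc_subset_Icc_right n.le_succ ht)) (w (n + 2))
    calc ∑ t ∈ Icc 1 (n + 1), f t (w (t + 1))
        = ∑ t ∈ Icc 1 n, f t (w (t + 1)) + f (n + 1) (w (n + 2)) := sum_Icc_succ_top (by omega) _
      _ ≤ ∑ t ∈ Icc 1 n, f t (w (n + 2)) + f (n + 1) (w (n + 2)) := by gcongr
      _ = ∑ t ∈ Icc 1 (n + 1), f t (w (n + 2)) := (sum_Icc_succ_top (by omega) _).symm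
      _ ≤ ∑ t ∈ Icc 1 (n + 1), f t u := hmin (n + 1) (by simp) u

theorem regret_le_sum_sub_beTheLeader (n : ℕ)
    (hmin : ∀ t ∈ Icc 1 n, ∀ u, ∑ i ∈ Icc 1 t, f i (w (t + 1)) ≤ ∑ i ∈ Icc 1 t, f i u) (u : α) :
    ∑ t ∈ Icc 1 n, f t (w t) - ∑ t ∈ Icc 1 n, f t u ≤
      ∑ t ∈ Icc 1 n, (f t (w t) - f t (w (t + 1))) := by
  rw [sum_sub_distrib]
  linarith [sum_beTheLeader_le f w n hmin u]

end BeTheLeader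

section LeastSquares

variable {ι n : Type*} [Fintype n]

noncomputable def sqLoss (y : ℝ) (φ γ : n → ℝ) : ℝ := (y - φ ⬝ᵥ γ) ^ 2 / 2

def sumVecMulVec (ψ : ι → n → ℝ) (s : Finset ι) : Matrix n n ℝ := ∑ i ∈ s, vecMulVec (ψ i) (ψ i)

theorem sumVecMulVec_mulVec (ψ : ι → n → ℝ) (s : Finset ι) (v : n → ℝ) :
    sumVecMulVec ψ s *ᵥ v = ∑ i ∈ s, (ψ i ⬝ᵥ v) • ψ i := by
  simp [sumVecMulVec, sum_mulVec, vecMulVec_mulVec]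

theorem dotProduct_sumVecMulVec_mulVec (ψ : ι → n → ℝ) (s : Finset ι) (v : n → ℝ) :
    v ⬝ᵥ sumVecMulVec ψ s *ᵥ v = ∑ i ∈ s, (ψ i ⬝ᵥ v) ^ 2 := by
  rw [sumVecMulVec_mulVec, dotProduct_sum]
  exact sum_congr rfl fun i _ ↦ by rw [dotProduct_smul, smul_eq_mul, dotProduct_comm, sq]

theorem sqLoss_sub_sqLoss (y : ℝ) (φ u g : n → ℝ) :
    sqLoss y φ u - sqLoss y φ g = (φ ⬝ᵥ (u - g)) ^ 2 / 2 - (y - φ ⬝ᵥ g) * (φ ⬝ᵥ (u - g)) := by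
  simp only [sqLoss, dotProduct_sub]
  ring

theorem sqLoss_sub_sqLoss_eq_mul_midpoint (y : ℝ) (φ a b : n → ℝ) :
    sqLoss y φ a - sqLoss y φ b = (y - φ ⬝ᵥ midpoint ℝ a b) * (φ ⬝ᵥ (b - a)) := by
  simp only [sqLoss, midpoint_eq_smul_add, invOf_eq_inv, dotProduct_smul, dotProduct_add,
    dotProduct_sub, smul_eq_mul]
  ring

variable {x : ι → ℝ} {ψ : ι → n → ℝ}

theorem sum_sqLoss_sub_sum_sqLoss_of_sumVecMulVec_mulVec {s : Finset ι} {g : n → ℝ}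
    (hg : sumVecMulVec ψ s *ᵥ g = ∑ i ∈ s, x i • ψ i) (u : n → ℝ) :
    ∑ i ∈ s, sqLoss (x i) (ψ i) u - ∑ i ∈ s, sqLoss (x i) (ψ i) g =
      ∑ i ∈ s, (ψ i ⬝ᵥ (u - g)) ^ 2 / 2 := by
  have hresidual : ∑ i ∈ s, (x i - ψ i ⬝ᵥ g) * (ψ i ⬝ᵥ (u - g)) = 0 := by
    have : ∑ i ∈ s, (x i - ψ i ⬝ᵥ g) • ψ i = 0 := by
      simp only [sub_smul, sum_sub_distrib, ← hg, sumVecMulVec_mulVec, sub_self]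
    calc ∑ i ∈ s, (x i - ψ i ⬝ᵥ g) * (ψ i ⬝ᵥ (u - g))
        = (∑ i ∈ s, (x i - ψ i ⬝ᵥ g) • ψ i) ⬝ᵥ (u - g) := by
          simp only [sum_dotProduct, smul_dotProduct, smul_eq_mul]
      _ = 0 := by rw [this, zero_dotProduct]
  rw [← sum_sub_distrib]
  simp only [sqLoss_sub_sqLoss, sum_sub_distrib, hresidual, sub_zero]

theorem sum_sqLoss_le_of_sumVecMulVec_mulVec {s : Finset ι} {g : n → ℝ}
    (hg : sumVecMulVec ψ s *ᵥ g = ∑ i ∈ s, x i • ψ i) (u : n → ℝ) :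
    ∑ i ∈ s, sqLoss (x i) (ψ i) g ≤ ∑ i ∈ s, sqLoss (x i) (ψ i) u := by
  have := sum_sqLoss_sub_sum_sqLoss_of_sumVecMulVec_mulVec hg u
  have : 0 ≤ ∑ i ∈ s, (ψ i ⬝ᵥ (u - g)) ^ 2 / 2 := sum_nonneg fun i _ ↦ by positivity
  linarith

theorem sum_sq_le_sqLoss_sub_sqLoss [DecidableEq ι] {s : Finset ι} {j : ι} (hj : j ∉ s)
    {a b : n → ℝ} (ha : sumVecMulVec ψ s *ᵥ a = ∑ i ∈ s, x i • ψ i)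
    (hb : sumVecMulVec ψ (insert j s) *ᵥ b = ∑ i ∈ insert j s, x i • ψ i) :
    ∑ i ∈ s, (ψ i ⬝ᵥ (b - a)) ^ 2 ≤ sqLoss (x j) (ψ j) a - sqLoss (x j) (ψ j) b := by
  have hpast := sum_sqLoss_sub_sum_sqLoss_of_sumVecMulVec_mulVec ha b
  have hnow := sum_sqLoss_sub_sum_sqLoss_of_sumVecMulVec_mulVec hb a
  have hswap : ∀ i, (ψ i ⬝ᵥ (a - b)) ^ 2 = (ψ i ⬝ᵥ (b - a)) ^ 2 := fun i ↦ by
    rw [← neg_sub, dotProduct_neg, neg_sq]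
  simp only [sum_insert hj, hswap] at hnow
  rw [← sum_div] at hpast hnow
  nlinarith [sq_nonneg (ψ j ⬝ᵥ (b - a))]

end LeastSquares

theorem Matrix.IsHermitian.mul_dotProduct_self_le {n : Type*} [Fintype n] [DecidableEq n]
    {A : Matrix n n ℝ} (hA : A.IsHermitian) {r : ℝ} (hr : r ∈ lowerBounds (spectrum ℝ A))
    (v : n → ℝ) : r * (v ⬝ᵥ v) ≤ v ⬝ᵥ A *ᵥ v := by
  open scoped MatrixOrder in
  have hle : algebraMap ℝ (Matrix n n ℝ) r ≤ A :=
    (algebraMap_le_iff_le_spectrum (a := A) hA.isSelfAdjoint).2 hr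
  simpa [sub_mulVec, Algebra.algebraMap_eq_smul_one, smul_mulVec, dotProduct_sub] using
    (Matrix.le_iff.1 hle).dotProduct_mulVec_nonneg v

theorem Matrix.IsHermitian.mul_mul_dotProduct_self_le {n : Type*} [Fintype n] [DecidableEq n]
    {A : Matrix n n ℝ} (hA : A.IsHermitian) {c r : ℝ} (hc : 0 < c)
    (hr : r ∈ lowerBounds (spectrum ℝ (c⁻¹ • A))) (v : n → ℝ) :
    c * r * (v ⬝ᵥ v) ≤ v ⬝ᵥ A *ᵥ v := by
  have h := (hA.smul (IsSelfAdjoint.all c⁻¹)).mul_dotProduct_self_le hr v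
  rw [smul_mulVec, dotProduct_smul, smul_eq_mul] at h
  calc c * r * (v ⬝ᵥ v) = c * (r * (v ⬝ᵥ v)) := mul_assoc _ _ _
    _ ≤ c * (c⁻¹ * (v ⬝ᵥ A *ᵥ v)) := by gcongr
    _ = v ⬝ᵥ A *ᵥ v := mul_inv_cancel_left₀ hc.ne' _

section EuclNorm

variable {d : ℕ}

theorem inner_withLp_equiv_symm (u v : Fin d → ℝ) :
    inner ℝ ((WithLp.equiv 2 (Fin d → ℝ)).symm u) ((WithLp.equiv 2 (Fin d → ℝ)).symm v) =
      u ⬝ᵥ v :=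
  (EuclideanSpace.inner_toLp_toLp u v).trans (dotProduct_comm _ _)

theorem euclNorm_sq (v : Fin d → ℝ) : euclNorm v ^ 2 = v ⬝ᵥ v := by
  rw [euclNorm, ← real_inner_self_eq_norm_sq, inner_withLp_equiv_symm]

theorem abs_dotProduct_le_euclNorm_mul (u v : Fin d → ℝ) :
    |u ⬝ᵥ v| ≤ euclNorm u * euclNorm v := by
  rw [← inner_withLp_equiv_symm]
  exact abs_real_inner_le_norm _ _

theorem sqLoss_sub_sqLoss_le_of_strongConvexity {y σ L : ℝ} {φ a b : Fin d → ℝ} (hσ : 0 < σ)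
    (hlower : σ * euclNorm (b - a) ^ 2 ≤ sqLoss y φ a - sqLoss y φ b)
    (hgrad : |y - φ ⬝ᵥ midpoint ℝ a b| * euclNorm φ ≤ L) :
    sqLoss y φ a - sqLoss y φ b ≤ L ^ 2 / σ := by
  have hupper : sqLoss y φ a - sqLoss y φ b ≤ L * euclNorm (b - a) :=
    calc sqLoss y φ a - sqLoss y φ b
        ≤ |y - φ ⬝ᵥ midpoint ℝ a b| * |φ ⬝ᵥ (b - a)| := by
          rw [sqLoss_sub_sqLoss_eq_mul_midpoint, ← abs_mul]
          exact le_abs_self _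
      _ ≤ |y - φ ⬝ᵥ midpoint ℝ a b| * (euclNorm φ * euclNorm (b - a)) := by
          gcongr
          exact abs_dotProduct_le_euclNorm_mul _ _
      _ ≤ L * euclNorm (b - a) := by
          rw [← mul_assoc]
          gcongr
          exact norm_nonneg _
  rw [le_div_iff₀ hσ]
  nlinarith [sq_nonneg (L - σ * euclNorm (b - a))]

theorem sqLoss_sub_sqLoss_le_of_lowerBounds_spectrum {ι : Type*} [DecidableEq ι] {s : Finset ι}
    {j : ι} (hj : j ∉ s) {x : ι → ℝ} {ψ : ι → Fin d → ℝ} {a b : Fin d → ℝ} {c r L : ℝ}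
    (hc : 0 < c) (hr : 0 < r) (hherm : (sumVecMulVec ψ s).IsHermitian)
    (hlam : r ∈ lowerBounds (spectrum ℝ (c⁻¹ • sumVecMulVec ψ s)))
    (ha : sumVecMulVec ψ s *ᵥ a = ∑ i ∈ s, x i • ψ i)
    (hb : sumVecMulVec ψ (insert j s) *ᵥ b = ∑ i ∈ insert j s, x i • ψ i)
    (hgrad : |x j - ψ j ⬝ᵥ midpoint ℝ a b| * euclNorm (ψ j) ≤ L) :
    sqLoss (x j) (ψ j) a - sqLoss (x j) (ψ j) b ≤ L ^ 2 / (c * r) := by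
  refine sqLoss_sub_sqLoss_le_of_strongConvexity (mul_pos hc hr) ?_ hgrad
  calc c * r * euclNorm (b - a) ^ 2 ≤ (b - a) ⬝ᵥ sumVecMulVec ψ s *ᵥ (b - a) := by
        rw [euclNorm_sq]
        exact hherm.mul_mul_dotProduct_self_le hc hlam _
    _ = ∑ i ∈ s, (ψ i ⬝ᵥ (b - a)) ^ 2 := dotProduct_sumVecMulVec_mulVec _ _ _
    _ ≤ _ := sum_sq_le_sqLoss_sub_sqLoss hj ha hb

end EuclNorm

theorem stmt_12_general {d : ℕ} (T : ℕ) (hT : 2 ≤ T)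
    (ψ : ℕ → Fin d → ℝ) (x : ℕ → ℝ)
    (ℓ : ℕ → (Fin d → ℝ) → ℝ)
    (hℓ : ∀ t γ, ℓ t γ = (x t - ψ t ⬝ᵥ γ) ^ 2 / 2)
    (S : ℕ → Matrix (Fin d) (Fin d) ℝ)
    (hSdef : ∀ t, S t = ∑ i ∈ Finset.Icc 1 t, vecMulVec (ψ i) (ψ i))
    (hSpos : ∀ t ∈ Finset.Icc 1 T, (S t).PosDef)
    (lamMin : ℕ → ℝ)
    (hlam : ∀ t ∈ Finset.Icc 1 T,
      IsLeast (spectrum ℝ (((t : ℝ)⁻¹) • S t)) (lamMin t))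
    (hlampos : ∀ t ∈ Finset.Icc 1 T, 0 < lamMin t)
    (γs : ℕ → Fin d → ℝ)
    (hγ : ∀ t ∈ Finset.Icc 2 (T + 1),
      γs t = (S (t - 1))⁻¹.mulVec (∑ i ∈ Finset.Icc 1 (t - 1), x i • ψ i))
    (L : ℝ)
    (hgrad : ∀ t ∈ Finset.Icc 2 T, ∀ γ ∈ segment ℝ (γs t) (γs (t + 1)),
      |x t - ψ t ⬝ᵥ γ| * euclNorm (ψ t) ≤ L) :
    ∀ γ : Fin d → ℝ,
      ∑ t ∈ Finset.Icc 1 T, ℓ t (γs t) - ∑ t ∈ Finset.Icc 1 T, ℓ t γ ≤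
        (ℓ 1 (γs 1) - ℓ 1 (γs 2)) +
          ∑ t ∈ Finset.Icc 2 T, L ^ 2 / (((t : ℝ) - 1) * lamMin (t - 1)) := by
  obtain rfl : ℓ = fun t ↦ sqLoss (x t) (ψ t) := funext₂ hℓ
  obtain rfl : S = fun t ↦ sumVecMulVec ψ (Icc 1 t) := funext hSdef
  beta_reduce at hSpos hlam hγ
  have hnormal : ∀ t ∈ Icc 1 T,
      sumVecMulVec ψ (Icc 1 t) *ᵥ γs (t + 1) = ∑ i ∈ Icc 1 t, x i • ψ i := fun t ht ↦ by
    rw [hγ (t + 1) (by simp at ht ⊢; omega), Nat.add_sub_cancel, mulVec_mulVec,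
      mul_nonsing_inv _ (hSpos t ht).det_pos.ne'.isUnit, one_mulVec]
  have hstep : ∀ t ∈ Icc 2 T, sqLoss (x t) (ψ t) (γs t) - sqLoss (x t) (ψ t) (γs (t + 1)) ≤
      L ^ 2 / (((t : ℝ) - 1) * lamMin (t - 1)) := by
    intro t ht
    obtain ⟨k, rfl⟩ : ∃ k, t = k + 1 := ⟨t - 1, by simp at ht; omega⟩
    have hk : k ∈ Icc 1 T := by simp at ht ⊢; omega
    have hnext := hnormal (k + 1) (by simp at ht ⊢; omega)
    rw [← insert_Icc_right_eq_Icc_add_one (by omega)] at hnext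
    rw [Nat.cast_add_one, add_sub_cancel_right, Nat.add_sub_cancel]
    exact sqLoss_sub_sqLoss_le_of_lowerBounds_spectrum (by simp)
      (by exact_mod_cast (mem_Icc.1 hk).1) (hlampos k hk) (hSpos k hk).isHermitian (hlam k hk).2
      (hnormal k hk) hnext (hgrad _ ht _ (midpoint_mem_segment _ _))
  intro γ
  calc _ ≤ ∑ t ∈ Icc 1 T, (sqLoss (x t) (ψ t) (γs t) - sqLoss (x t) (ψ t) (γs (t + 1))) :=
        regret_le_sum_sub_beTheLeader _ γs T
          (fun t ht ↦ sum_sqLoss_le_of_sumVecMulVec_mulVec (hnormal t ht)) γ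
    _ = _ + ∑ t ∈ Icc 2 T, (sqLoss (x t) (ψ t) (γs t) - sqLoss (x t) (ψ t) (γs (t + 1))) := by
        rw [← insert_Icc_add_one_left_eq_Icc (by omega : 1 ≤ T), sum_insert (by simp)]
        rfl
    _ ≤ _ := by gcongr with t ht; exact hstep t ht

theorem stmt_12 {d : ℕ} (hd : 1 ≤ d) (T : ℕ) (hT : 2 ≤ T)
    (ψ : ℕ → Fin d → ℝ) (x : ℕ → ℝ)
    (ℓ : ℕ → (Fin d → ℝ) → ℝ)
    (hℓ : ∀ t γ, ℓ t γ = (x t - ψ t ⬝ᵥ γ) ^ 2 / 2)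
    (S : ℕ → Matrix (Fin d) (Fin d) ℝ)
    (hSdef : ∀ t, S t = ∑ i ∈ Finset.Icc 1 t, vecMulVec (ψ i) (ψ i))
    (hSpos : ∀ t ∈ Finset.Icc 1 T, (S t).PosDef)
    (lamMin : ℕ → ℝ)
    (hlam : ∀ t ∈ Finset.Icc 1 T,
      IsLeast (spectrum ℝ (((t : ℝ)⁻¹) • S t)) (lamMin t))
    (hlampos : ∀ t ∈ Finset.Icc 1 T, 0 < lamMin t)
    (γs : ℕ → Fin d → ℝ)
    (hγ1 : γs 1 = 0)
    (hγ : ∀ t ∈ Finset.Icc 2 (T + 1),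
      γs t = (S (t - 1))⁻¹.mulVec (∑ i ∈ Finset.Icc 1 (t - 1), x i • ψ i))
    (L : ℝ) (hL : 0 < L)
    (hgrad : ∀ t ∈ Finset.Icc 2 T, ∀ γ ∈ segment ℝ (γs t) (γs (t + 1)),
      |x t - ψ t ⬝ᵥ γ| * euclNorm (ψ t) ≤ L) :
    ∀ γ : Fin d → ℝ,
      ∑ t ∈ Finset.Icc 1 T, ℓ t (γs t) - ∑ t ∈ Finset.Icc 1 T, ℓ t γ ≤
        (ℓ 1 (γs 1) - ℓ 1 (γs 2)) +
          ∑ t ∈ Finset.Icc 2 T, L ^ 2 / (((t : ℝ) - 1) * lamMin (t - 1)) :=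
  stmt_12_general T hT ψ x ℓ hℓ S hSdef hSpos lamMin hlam hlampos γs hγ L hgrad
end

section
/- In the weighted-majority setup with parameter η = √((log n)/T), if additionally η ≤ 1/2, then for every expert h ∈ H: ∑_{t=1}^T (ℓ_t(ALG) − ℓ_t(h))/b_t ≤ 2·√(T · log n). -/
/-!
Multiplicative weights, with losses normalised to `x t h = ℓ t h / b t ∈ [0, 1]`. The potential
`log W_t` drops by at least `η` times the algorithm's normalised loss in every round, because
`(1 - η) ^ x ≤ 1 - η x` (Bernoulli) and `log (1 - y) ≤ -y`; on the other hand it stays above the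
log-weight `L · log (1 - η)` of any single expert with total normalised loss `L`, and
`log (1 - η) ≥ -(η + η²)` for `η ≤ 1/2`. Together: `η · regret ≤ log n + η² T`, and the choice
`η² T = log n` balances the two terms.
-/

open Finset Real

lemma neg_add_sq_le_log_one_sub {x : ℝ} (hx0 : 0 ≤ x) (hx : x ≤ 1 / 2) :
    -(x + x ^ 2) ≤ log (1 - x) := by
  rw [le_log_iff_exp_le (by linarith), exp_neg, inv_le_iff_one_le_mul₀ (exp_pos _)]
  have hexp := quadratic_le_exp_of_nonneg (by positivity : 0 ≤ x + x ^ 2)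
  nlinarith [mul_le_mul_of_nonneg_left hexp (by linarith : (0 : ℝ) ≤ 1 - x),
    mul_nonneg (mul_nonneg hx0 hx0) (by linarith : (0 : ℝ) ≤ 1 / 2 - x)]

lemma le_sub_sum_Icc_of_succ_le {f a : ℕ → ℝ} {T : ℕ}
    (h : ∀ t ∈ Icc 1 T, f (t + 1) ≤ f t - a t) : f (T + 1) ≤ f 1 - ∑ t ∈ Icc 1 T, a t := by
  induction T with
  | zero => simp
  | succ k ih =>
    rw [sum_Icc_succ_top (by omega)]
    have hk := h (k + 1) (mem_Icc.mpr ⟨by omega, le_rfl⟩)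
    have := ih fun t ht => h t (Icc_subset_Icc_right (by omega) ht)
    linarith

section WeightedMean

variable {ι : Type*} [Fintype ι]

noncomputable def weightedMean (w x : ι → ℝ) : ℝ := (∑ i, w i * x i) / ∑ i, w i

lemma weightedMean_div_const (w x : ι → ℝ) (c : ℝ) :
    weightedMean w (fun i => x i / c) = weightedMean w x / c := by
  simp only [weightedMean, mul_div_assoc', ← sum_div]
  rw [div_right_comm]

lemma weightedMean_le_one [Nonempty ι] {w x : ι → ℝ} (hw : ∀ i, 0 < w i) (hx : ∀ i, x i ≤ 1) :
    weightedMean w x ≤ 1 := by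
  rw [weightedMean, div_le_one (sum_pos (fun i _ => hw i) univ_nonempty)]
  exact sum_le_sum fun i _ => mul_le_of_le_one_right (hw i).le (hx i)

lemma log_sum_mul_one_sub_rpow_le [Nonempty ι] {w x : ι → ℝ} {η : ℝ} (hw : ∀ i, 0 < w i)
    (hx : ∀ i, x i ∈ Set.Icc (0 : ℝ) 1) (hη0 : 0 ≤ η) (hη1 : η < 1) :
    log (∑ i, w i * (1 - η) ^ x i) ≤ log (∑ i, w i) - η * weightedMean w x := by
  set W := ∑ i, w i
  have hW : 0 < W := sum_pos (fun i _ => hw i) univ_nonempty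
  have hmean : η * weightedMean w x < 1 :=
    lt_of_le_of_lt (mul_le_of_le_one_right hη0 (weightedMean_le_one hw fun i => (hx i).2)) hη1
  have hbernoulli : ∑ i, w i * (1 - η) ^ x i ≤ W * (1 - η * weightedMean w x) := by
    calc ∑ i, w i * (1 - η) ^ x i ≤ ∑ i, w i * (1 - η * x i) := by
          refine sum_le_sum fun i _ => mul_le_mul_of_nonneg_left ?_ (hw i).le
          simpa [sub_eq_add_neg, mul_comm] using
            rpow_one_add_le_one_add_mul_self (by linarith : -1 ≤ -η) (hx i).1 (hx i).2
      _ = W * (1 - η * weightedMean w x) := by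
          rw [mul_sub, mul_one, weightedMean, mul_div_assoc', mul_div_assoc',
            mul_div_cancel_left₀ _ hW.ne', mul_sum, ← sum_sub_distrib]
          exact sum_congr rfl fun i _ => by ring
  have hpos : 0 < ∑ i, w i * (1 - η) ^ x i :=
    sum_pos (fun i _ => mul_pos (hw i) (rpow_pos_of_pos (by linarith) _)) univ_nonempty
  calc log (∑ i, w i * (1 - η) ^ x i) ≤ log (W * (1 - η * weightedMean w x)) :=
        log_le_log hpos hbernoulli
    _ = log W + log (1 - η * weightedMean w x) := log_mul hW.ne' (by linarith)
    _ ≤ log W - η * weightedMean w x := by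
        linarith [log_le_sub_one_of_pos (by linarith : 0 < 1 - η * weightedMean w x)]

end WeightedMean

section MultiplicativeWeights

variable {H : Type*} {T : ℕ} {η : ℝ} {x w : ℕ → H → ℝ}

lemma weight_succ_eq_rpow (hη : η < 1) (hw1 : ∀ h, w 1 h = 1)
    (hwrec : ∀ t ∈ Icc 1 T, ∀ h, w (t + 1) h = w t h * (1 - η) ^ x t h)
    {m : ℕ} (hm : m ≤ T) (h : H) : w (m + 1) h = (1 - η) ^ ∑ t ∈ Icc 1 m, x t h := by
  induction m with
  | zero => simp [hw1]
  | succ k ih =>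
    rw [sum_Icc_succ_top (by omega), hwrec (k + 1) (mem_Icc.mpr ⟨by omega, hm⟩), ih (by omega),
      ← rpow_add (by linarith)]

lemma weight_pos (hη : η < 1) (hw1 : ∀ h, w 1 h = 1)
    (hwrec : ∀ t ∈ Icc 1 T, ∀ h, w (t + 1) h = w t h * (1 - η) ^ x t h)
    {m : ℕ} (hm1 : 1 ≤ m) (hm : m ≤ T + 1) (h : H) : 0 < w m h := by
  obtain ⟨k, rfl⟩ := Nat.exists_eq_add_of_le' hm1
  rw [weight_succ_eq_rpow hη hw1 hwrec (by omega)]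
  exact rpow_pos_of_pos (by linarith) _

theorem mul_sum_weightedMean_sub_le [Fintype H] [Nonempty H] (hη0 : 0 ≤ η) (hη : η ≤ 1 / 2)
    (hx : ∀ t ∈ Icc 1 T, ∀ h, x t h ∈ Set.Icc (0 : ℝ) 1) (hw1 : ∀ h, w 1 h = 1)
    (hwrec : ∀ t ∈ Icc 1 T, ∀ h, w (t + 1) h = w t h * (1 - η) ^ x t h) (h : H) :
    η * ∑ t ∈ Icc 1 T, (weightedMean (w t) (x t) - x t h) ≤
      log (Fintype.card H) + η ^ 2 * T := by
  have hη1 : η < 1 := by linarith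
  set L := ∑ t ∈ Icc 1 T, x t h
  have hpotential : log (∑ h', w (T + 1) h') ≤
      log (Fintype.card H) - η * ∑ t ∈ Icc 1 T, weightedMean (w t) (x t) := by
    have hstart : log (∑ h', w 1 h') = log (Fintype.card H) := by simp [hw1]
    rw [← hstart, mul_sum]
    refine le_sub_sum_Icc_of_succ_le (f := fun t => log (∑ h', w t h')) fun t ht => ?_
    simp only [hwrec t ht]
    exact log_sum_mul_one_sub_rpow_le
      (weight_pos hη1 hw1 hwrec (mem_Icc.mp ht).1 (by linarith [(mem_Icc.mp ht).2]))
      (hx t ht) hη0 hη1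
  have hexpert : L * log (1 - η) ≤ log (∑ h', w (T + 1) h') := by
    have hwT := weight_pos hη1 hw1 hwrec (m := T + 1) (by omega) le_rfl
    calc L * log (1 - η) = log (w (T + 1) h) := by
          rw [weight_succ_eq_rpow hη1 hw1 hwrec le_rfl, log_rpow (by linarith)]
      _ ≤ log (∑ h', w (T + 1) h') :=
          log_le_log (hwT h) (single_le_sum (fun h' _ => (hwT h').le) (mem_univ h))
  have hL0 : 0 ≤ L := sum_nonneg fun t ht => (hx t ht h).1
  have hLT : L ≤ T := by
    simpa using sum_le_sum fun t ht => (hx t ht h).2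
  have hlog := mul_le_mul_of_nonneg_left (neg_add_sq_le_log_one_sub hη0 hη) hL0
  rw [sum_sub_distrib]
  linarith [mul_le_mul_of_nonneg_left hLT (sq_nonneg η)]

end MultiplicativeWeights

theorem stmt_16 {H : Type*} [Fintype H] (n T : ℕ) (hn : 2 ≤ n)
    (hcard : Fintype.card H = n) (hT : 1 ≤ T)
    (ℓ : ℕ → H → ℝ) (b : ℕ → ℝ) (η : ℝ)
    (hη : η = Real.sqrt (Real.log n / T)) (hη1 : η ≤ 1 / 2)
    (hℓ0 : ∀ t ∈ Finset.Icc 1 T, ∀ h : H, 0 ≤ ℓ t h)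
    (hb : ∀ t ∈ Finset.Icc 1 T, 0 < b t)
    (hℓb : ∀ t ∈ Finset.Icc 1 T, ∀ h : H, ℓ t h ≤ b t)
    (w : ℕ → H → ℝ)
    (hw1 : ∀ h : H, w 1 h = 1)
    (hwrec : ∀ t ∈ Finset.Icc 1 T, ∀ h : H,
      w (t + 1) h = w t h * (1 - η) ^ (ℓ t h / b t)) :
    ∀ h : H,
      ∑ t ∈ Finset.Icc 1 T,
          ((∑ h' : H, w t h' * ℓ t h') / (∑ h' : H, w t h') - ℓ t h) / b t ≤
        2 * Real.sqrt (T * Real.log n) := by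
  intro h
  have : Nonempty H := Fintype.card_pos_iff.mp (by omega)
  have hT0 : (0 : ℝ) < T := by exact_mod_cast hT
  have hratio : 0 < log n / T := div_pos (log_pos (by exact_mod_cast hn)) hT0
  have hη0 : 0 < η := hη ▸ sqrt_pos.mpr hratio
  have hlog : log n = η ^ 2 * T := by
    rw [hη, sq_sqrt hratio.le, div_mul_cancel₀ _ hT0.ne']
  have hsqrt : sqrt (T * log n) = η * T := by
    rw [hlog, show (T : ℝ) * (η ^ 2 * T) = (η * T) ^ 2 by ring, sqrt_sq (by positivity)]
  have hx : ∀ t ∈ Icc 1 T, ∀ h, ℓ t h / b t ∈ Set.Icc (0 : ℝ) 1 := fun t ht h =>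
    ⟨div_nonneg (hℓ0 t ht h) (hb t ht).le, (div_le_one (hb t ht)).mpr (hℓb t ht h)⟩
  have hregret := mul_sum_weightedMean_sub_le hη0.le hη1 hx hw1 hwrec h
  simp only [weightedMean_div_const, ← sub_div, hcard, hlog] at hregret
  rw [hsqrt]
  refine le_of_mul_le_mul_left ?_ hη0
  unfold weightedMean at hregret
  linarith
end
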